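/- Let G be a simple graph on vertex set Fin n and let h > 0 be a real number such that for every nonempty subset S ⊆ Fin n with |S| ≤ n/2 one has |∂S| ≥ h·|S|. Let p : (Fin n → Bool) → ℝ be a probability distribution symmetric under bitwise negation (p(x) = p(x̄) for all x), and let d be a natural number. If Σ_x p(x)·cut_G(x) ≤ (h/6)·n and p({x : |x| ≤ n/3}) ≤ 12 · 2^{3d/2} · n^{−1/2}, then n ≤ 48² · 8^d. -/

import Mathlib

/-- The number of edges of `G` whose endpoints receive different values under the
Boolean assignment `x` (the "cut" of `x`). -/
def SimpleGraph.cutCard {n : ℕ} (G : SimpleGraph (Fin n)) [DecidableRel G.Adj]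
    (x : Fin n → Bool) : ℕ :=
  (G.edgeFinset.filter (fun e => ¬ (Sym2.map x e).IsDiag)).card

/-- The edge boundary of a set `S` of vertices: edges with exactly one endpoint in `S`. -/
def SimpleGraph.bdryCard {n : ℕ} (G : SimpleGraph (Fin n)) [DecidableRel G.Adj]
    (S : Finset (Fin n)) : ℕ :=
  G.cutCard (fun v => decide (v ∈ S))

/-- The Hamming weight of a Boolean string. -/
def hammingWt {n : ℕ} (x : Fin n → Bool) : ℕ :=
  (Finset.univ.filter (fun j => x j = true)).card

/-! Strings with `n/3 < |x| < 2n/3` cut the vertex set into two sides of more than `n/3`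
vertices each, so by expansion their cut is at least `h n / 3`; by Markov's inequality the low
expected energy leaves them total mass at most `1/2`. Negation symmetry gives the strings with
`|x| ≥ 2n/3` the same mass as those with `|x| ≤ n/3`, so the latter carry mass at least `1/4`.
Against the bound `12 · 2^{3d/2} / √n` this forces `√n ≤ 48 · 2^{3d/2}`. -/

lemma hammingWt_not {n : ℕ} (x : Fin n → Bool) :
    (hammingWt (fun j => ! x j) : ℝ) = n - hammingWt x := by
  have hsplit := Finset.card_filter_add_card_filter_not (s := Finset.univ) (fun j => x j = true)
  simp only [Finset.card_univ, Fintype.card_fin, Bool.not_eq_true] at hsplit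
  simp only [hammingWt, Bool.not_eq_eq_eq_not, Bool.not_true]
  rw [eq_sub_iff_add_eq, add_comm]
  exact_mod_cast hsplit

lemma SimpleGraph.cutCard_not {n : ℕ} (G : SimpleGraph (Fin n)) [DecidableRel G.Adj]
    (x : Fin n → Bool) : G.cutCard (fun j => ! x j) = G.cutCard x := by
  unfold SimpleGraph.cutCard
  congr 1
  refine Finset.filter_congr fun e _ => Sym2.inductionOn e fun a b => ?_
  simp only [Sym2.map_mk, Sym2.mk_isDiag_iff, Bool.not_inj_iff]

lemma SimpleGraph.cutCard_eq_bdryCard {n : ℕ} (G : SimpleGraph (Fin n)) [DecidableRel G.Adj]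
    (x : Fin n → Bool) : G.cutCard x = G.bdryCard (Finset.univ.filter fun j => x j = true) := by
  simp [SimpleGraph.bdryCard]

lemma SimpleGraph.mul_min_hammingWt_le_cutCard {n : ℕ} (G : SimpleGraph (Fin n))
    [DecidableRel G.Adj] {h : ℝ}
    (hCheeger : ∀ S : Finset (Fin n), S.Nonempty → (S.card : ℝ) ≤ n / 2 →
      h * S.card ≤ (G.bdryCard S : ℝ))
    (x : Fin n → Bool) :
    h * min (hammingWt x : ℝ) (n - hammingWt x) ≤ G.cutCard x := by
  wlog hx : (hammingWt x : ℝ) ≤ n / 2 generalizing x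
  · have := this (fun j => ! x j) (by rw [hammingWt_not]; linarith)
    rwa [G.cutCard_not, hammingWt_not, sub_sub_cancel, min_comm] at this
  rw [min_eq_left (by linarith), G.cutCard_eq_bdryCard]
  obtain hS | hS := (Finset.univ.filter fun j => x j = true).eq_empty_or_nonempty
  · simp [hammingWt, hS]
  · exact hCheeger _ hS hx

lemma sum_mul_comp_not_of_symm {n : ℕ} {p : (Fin n → Bool) → ℝ}
    (hsym : ∀ x, p x = p (fun j => ! x j)) (f : (Fin n → Bool) → ℝ) :
    ∑ x, p x * f (fun j => ! x j) = ∑ x, p x * f x := by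
  let neg : (Fin n → Bool) ≃ (Fin n → Bool) :=
    Function.Involutive.toPerm (fun x j => ! x j) fun x => funext fun j => Bool.not_not (x j)
  calc ∑ x, p x * f (neg x) = ∑ x, p (neg x) * f (neg x) :=
        Finset.sum_congr rfl fun x _ => congrArg (· * f (neg x)) (hsym x)
    _ = ∑ x, p x * f x := neg.sum_comp (fun x => p x * f x)

lemma SimpleGraph.mul_le_ite_add_ite_not_add_three_mul_cutCard {n : ℕ} (G : SimpleGraph (Fin n))
    [DecidableRel G.Adj] {h : ℝ} (hh : 0 ≤ h)
    (hCheeger : ∀ S : Finset (Fin n), S.Nonempty → (S.card : ℝ) ≤ n / 2 →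
      h * S.card ≤ (G.bdryCard S : ℝ))
    (x : Fin n → Bool) :
    h * n ≤ h * n * ((if (hammingWt x : ℝ) ≤ n / 3 then 1 else 0) +
      (if (hammingWt (fun j => ! x j) : ℝ) ≤ n / 3 then 1 else 0)) + 3 * G.cutCard x := by
  have hhn : 0 ≤ h * n := by positivity
  have hcut : (0 : ℝ) ≤ G.cutCard x := Nat.cast_nonneg _
  split_ifs with hx hnx hnx
  · linarith
  · linarith
  · linarith
  · rw [hammingWt_not] at hnx
    have hmin : h * (n / 3) ≤ h * min (hammingWt x : ℝ) (n - hammingWt x) :=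
      mul_le_mul_of_nonneg_left (le_min (by linarith) (by linarith)) hh
    linarith [G.mul_min_hammingWt_le_cutCard hCheeger x]

theorem quarter_le_sum_filter_hammingWt_le_third {n : ℕ} (G : SimpleGraph (Fin n))
    [DecidableRel G.Adj] {h : ℝ} (hh : 0 < h)
    (hCheeger : ∀ S : Finset (Fin n), S.Nonempty → (S.card : ℝ) ≤ n / 2 →
      h * S.card ≤ (G.bdryCard S : ℝ))
    {p : (Fin n → Bool) → ℝ} (hp0 : ∀ x, 0 ≤ p x) (hp1 : ∑ x, p x = 1)
    (hsym : ∀ x, p x = p (fun j => ! x j))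
    (hlow : ∑ x, p x * (G.cutCard x : ℝ) ≤ (h / 6) * n) (hn : 0 < n) :
    1 / 4 ≤ ∑ x ∈ Finset.univ.filter (fun x => (hammingWt x : ℝ) ≤ n / 3), p x := by
  set light : (Fin n → Bool) → ℝ := fun x => if (hammingWt x : ℝ) ≤ n / 3 then 1 else 0
  have hlight : ∑ x ∈ Finset.univ.filter (fun x => (hammingWt x : ℝ) ≤ n / 3), p x =
      ∑ x, p x * light x := by
    simp [light, Finset.sum_filter, mul_ite]
  have hsum : h * n ≤ h * n * (2 * ∑ x, p x * light x) + 3 * ∑ x, p x * G.cutCard x :=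
    calc h * n = ∑ x, p x * (h * n) := by rw [← Finset.sum_mul, hp1, one_mul]
      _ ≤ ∑ x, p x * (h * n * (light x + light (fun j => ! x j)) + 3 * G.cutCard x) :=
        Finset.sum_le_sum fun x _ => mul_le_mul_of_nonneg_left
          (G.mul_le_ite_add_ite_not_add_three_mul_cutCard hh.le hCheeger x) (hp0 x)
      _ = h * n * (∑ x, p x * light x + ∑ x, p x * light (fun j => ! x j)) +
          3 * ∑ x, p x * G.cutCard x := by
        simp only [mul_add, Finset.mul_sum, ← Finset.sum_add_distrib]
        exact Finset.sum_congr rfl fun x _ => by ring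
      _ = h * n * (2 * ∑ x, p x * light x) + 3 * ∑ x, p x * G.cutCard x := by
        rw [sum_mul_comp_not_of_symm hsym light]; ring
  have hhn : 0 < h * n := mul_pos hh (by exact_mod_cast hn)
  have hscaled : h * n * (1 / 4) ≤ h * n * ∑ x, p x * light x := by linarith
  rw [hlight]
  exact le_of_mul_le_mul_left hscaled hhn

lemma le_div_sq_of_le_mul_rpow_neg_half {x a c : ℝ} (hx : 0 < x) (ha : 0 < a)
    (h : a ≤ c * x ^ (-(1 : ℝ) / 2)) : x ≤ (c / a) ^ 2 := by
  have hsqrt : x ^ (-(1 : ℝ) / 2) = (√x)⁻¹ := by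
    rw [neg_div, Real.rpow_neg hx.le, Real.sqrt_eq_rpow]
  rw [hsqrt, ← div_eq_mul_inv, le_div_iff₀ (Real.sqrt_pos.2 hx)] at h
  have hc : 0 ≤ c / a := div_nonneg ((mul_nonneg ha.le (Real.sqrt_nonneg x)).trans h) ha.le
  exact (Real.sqrt_le_left hc).1 ((le_div_iff₀ ha).2 (by linarith))

lemma two_rpow_three_mul_div_two_sq (d : ℕ) :
    ((2 : ℝ) ^ ((3 * (d : ℝ)) / 2)) ^ 2 = 8 ^ d := by
  rw [← Real.rpow_natCast, ← Real.rpow_mul zero_le_two,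
    show (3 * (d : ℝ)) / 2 * ((2 : ℕ) : ℝ) = ((3 * d : ℕ) : ℝ) by push_cast; ring,
    Real.rpow_natCast, pow_mul]
  norm_num

theorem stmt2 (n : ℕ) (G : SimpleGraph (Fin n)) [DecidableRel G.Adj] (h : ℝ)
    (hh : 0 < h)
    (hCheeger : ∀ S : Finset (Fin n), S.Nonempty → (S.card : ℝ) ≤ n / 2 →
      h * S.card ≤ (G.bdryCard S : ℝ))
    (p : (Fin n → Bool) → ℝ)
    (hp0 : ∀ x, 0 ≤ p x) (hp1 : ∑ x, p x = 1)
    (hsym : ∀ x, p x = p (fun j => ! x j))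
    (d : ℕ)
    (hlow : ∑ x, p x * (G.cutCard x : ℝ) ≤ (h / 6) * n)
    (hlight : ∑ x ∈ Finset.univ.filter (fun x => (hammingWt x : ℝ) ≤ n / 3), p x ≤
      12 * (2 : ℝ) ^ ((3 * (d : ℝ)) / 2) * (n : ℝ) ^ (-(1 : ℝ) / 2)) :
    n ≤ 48 ^ 2 * 8 ^ d := by
  rcases Nat.eq_zero_or_pos n with rfl | hn
  · exact Nat.zero_le _
  have hquarter := quarter_le_sum_filter_hammingWt_le_third G hh hCheeger hp0 hp1 hsym hlow hn
  have hsq := le_div_sq_of_le_mul_rpow_neg_half (Nat.cast_pos.2 hn)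
    (by norm_num : (0 : ℝ) < 1 / 4) (hquarter.trans hlight)
  have hreal : (n : ℝ) ≤ 48 ^ 2 * 8 ^ d := by
    rw [← two_rpow_three_mul_div_two_sq d]
    linarith
  exact_mod_cast hreal
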